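/- If a dimaze (D, B_0) defines a matroid M_L(D, B_0) and has the property that maximal linkable sets coincide with sets linkable onto B_0, then the dual matroid of M_L(D, B_0) is the path-transversal system M_{PT}((D, B_0)^⋆) of the converted bimaze (in particular the latter is a matroid). -/

import Mathlib

open Set


/-- A finite directed path/walk or a ray, encoded by a vertex function and a length:
the number of edges, `⊤` for a ray. Only indices `≤ len` are meaningful. -/
structure DiWalk (V : Type*) where
  vtx : ℕ → V
  len : ℕ∞

namespace DiWalk

variable {V : Type*} (w : DiWalk V)

/-- The vertices of the walk. -/
def support : Set V := {v | ∃ i : ℕ, (i : ℕ∞) ≤ w.len ∧ w.vtx i = v}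

/-- The directed edges of the walk. -/
def edges : Set (V × V) := {e | ∃ i : ℕ, (i : ℕ∞) + 1 ≤ w.len ∧ e = (w.vtx i, w.vtx (i + 1))}

/-- The initial vertex. -/
def Ini : V := w.vtx 0

/-- The terminal vertex (meaningful for finite walks). -/
def Ter : V := w.vtx w.len.toNat

/-- `w` is a ray, i.e. one-way infinite. -/
def IsRay : Prop := w.len = ⊤

/-- `w` is a (finite) directed path or a directed ray in the digraph `D`: consecutive
vertices are joined by edges of `D` and no vertex is repeated. -/
def IsPathIn (D : V → V → Prop) : Prop :=
  (∀ i : ℕ, (i : ℕ∞) + 1 ≤ w.len → D (w.vtx i) (w.vtx (i + 1))) ∧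
  (∀ i j : ℕ, (i : ℕ∞) ≤ w.len → (j : ℕ∞) ≤ w.len → w.vtx i = w.vtx j → i = j)

end DiWalk

variable {V : Type*}

/-- The vertex set of a family of walks. -/
def VSet (Q : Set (DiWalk V)) : Set V := ⋃ q ∈ Q, q.support

/-- The edge set of a family of walks. -/
def ESet (Q : Set (DiWalk V)) : Set (V × V) := ⋃ q ∈ Q, q.edges

/-- The set of initial vertices of a family of walks. -/
def IniSet (Q : Set (DiWalk V)) : Set V := DiWalk.Ini '' Q

/-- The set of terminal vertices of the finite members of a family of walks. -/
def TerSet (Q : Set (DiWalk V)) : Set V := {v | ∃ q ∈ Q, ¬ q.IsRay ∧ q.Ter = v}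

/-- The members of `Q` are pairwise vertex-disjoint. -/
def PairwiseDisjointWalks (Q : Set (DiWalk V)) : Prop :=
  ∀ p ∈ Q, ∀ q ∈ Q, p ≠ q → Disjoint p.support q.support

/-- `Q` is a set of pairwise disjoint directed paths or rays in `D`. -/
def IsPathSystem (D : V → V → Prop) (Q : Set (DiWalk V)) : Prop :=
  (∀ q ∈ Q, q.IsPathIn D) ∧ PairwiseDisjointWalks Q

/-- A linkage in the dimaze `(D, B0)`: a set of pairwise disjoint finite directed paths
ending in `B0`. -/
def IsLinkage (D : V → V → Prop) (B0 : Set V) (Q : Set (DiWalk V)) : Prop :=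
  IsPathSystem D Q ∧ ∀ q ∈ Q, ¬ q.IsRay ∧ q.Ter ∈ B0

/-- `I` is linkable to `B0` in `(D, B0)`. -/
def Linkable (D : V → V → Prop) (B0 : Set V) (I : Set V) : Prop :=
  ∃ Q, IsLinkage D B0 Q ∧ IniSet Q = I

/-- `I` is linkable onto `B0`: some linkage from `I` has terminal vertex set exactly `B0`. -/
def LinkableOnto (D : V → V → Prop) (B0 : Set V) (I : Set V) : Prop :=
  ∃ Q, IsLinkage D B0 Q ∧ IniSet Q = I ∧ TerSet Q = B0

/-- `B0` is a set of sinks of `D`. -/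
def IsDimaze (D : V → V → Prop) (B0 : Set V) : Prop := ∀ b ∈ B0, ∀ v, ¬ D b v

/-- `v` is the centre of a linking fan: infinitely many non-trivial directed paths to `B0`
from `v`, pairwise meeting only in `v`. -/
def IsFanCentre (D : V → V → Prop) (B0 : Set V) (v : V) : Prop :=
  ∃ P : Set (DiWalk V), P.Infinite ∧
    (∀ p ∈ P, p.IsPathIn D ∧ ¬ p.IsRay ∧ 1 ≤ p.len ∧ p.Ini = v ∧ p.Ter ∈ B0) ∧
    (∀ p ∈ P, ∀ q ∈ P, p ≠ q → p.support ∩ q.support ⊆ {v})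

/-- The ray `R` is the spine of an outgoing comb with teeth ending in `B0`: there are
infinitely many pairwise disjoint non-trivial paths from distinct vertices of `R` to `B0`,
each meeting `R` exactly in its initial vertex. -/
def IsSpine (D : V → V → Prop) (B0 : Set V) (R : DiWalk V) : Prop :=
  R.IsPathIn D ∧ R.IsRay ∧
  ∃ P : Set (DiWalk V), P.Infinite ∧
    (∀ p ∈ P, p.IsPathIn D ∧ ¬ p.IsRay ∧ 1 ≤ p.len ∧ p.Ini ∈ R.support ∧ p.Ter ∈ B0 ∧
      p.support ∩ R.support = {p.Ini}) ∧
    PairwiseDisjointWalks P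

/-- `(D, B0)` contains no subdivision of an outgoing comb. -/
def COFree (D : V → V → Prop) (B0 : Set V) : Prop := ¬ ∃ R, IsSpine D B0 R

/-- `(D, B0)` contains no subdivision of a linking fan. -/
def FanFree (D : V → V → Prop) (B0 : Set V) : Prop := ¬ ∃ v, IsFanCentre D B0 v

/-- A topological path in `(D, B0)`. -/
def IsTopPath (D : V → V → Prop) (B0 : Set V) (w : DiWalk V) : Prop :=
  w.IsPathIn D ∧
    ((¬ w.IsRay ∧ w.Ter ∈ B0) ∨ (¬ w.IsRay ∧ IsFanCentre D B0 w.Ter) ∨ IsSpine D B0 w)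

/-- `I` is topologically linkable in `(D, B0)`. -/
def TopLinkable (D : V → V → Prop) (B0 : Set V) (I : Set V) : Prop :=
  ∃ Q : Set (DiWalk V), (∀ q ∈ Q, IsTopPath D B0 q) ∧ PairwiseDisjointWalks Q ∧ IniSet Q = I
section Bipartite

variable {V W : Type*}

/-- `m` is a matching in the bipartite graph with edge set `E ⊆ V × W`. -/
def IsBipMatching (E m : Set (V × W)) : Prop :=
  m ⊆ E ∧ ∀ p ∈ m, ∀ q ∈ m, (p.1 = q.1 ∨ p.2 = q.2) → p = q

/-- `I ⊆ V` is matchable in the bipartite graph with edge set `E`. -/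
def Matchable (E : Set (V × W)) (I : Set V) : Prop :=
  ∃ m, IsBipMatching E m ∧ Prod.fst '' m = I

/-- One step along an edge of `F` in the bipartite graph, on vertex type `V ⊕ W`. -/
def bipStep (F : Set (V × W)) : (V ⊕ W) → (V ⊕ W) → Prop := fun a b =>
  match a, b with
  | Sum.inl v, Sum.inr w => (v, w) ∈ F
  | Sum.inr w, Sum.inl v => (v, w) ∈ F
  | _, _ => False

/-- Every connected component of the bipartite graph with edge set `F` is finite. -/
def FiniteComponents (F : Set (V × W)) : Prop :=
  ∀ x : V ⊕ W, {y | Relation.ReflTransGen (bipStep F) x y}.Finite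

/-- `m` is an `m0`-matching: a matching such that every component of `m0 ∪ m` is finite. -/
def IsM0Matching (E m0 m : Set (V × W)) : Prop :=
  IsBipMatching E m ∧ FiniteComponents (m0 ∪ m)

/-- `I` is `m0`-matchable. -/
def M0Matchable (E m0 : Set (V × W)) (I : Set V) : Prop :=
  ∃ m, IsM0Matching E m0 m ∧ Prod.fst '' m = I

/-- `I` is `m0`-matchable onto `W'`. -/
def M0MatchableOnto (E m0 : Set (V × W)) (I : Set V) (W' : Set W) : Prop :=
  ∃ m, IsM0Matching E m0 m ∧ Prod.fst '' m = I ∧ Prod.snd '' m = W'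

end Bipartite

section Star

variable {V : Type*}

/-- The edge set of the converted bimaze of the dimaze `(D, B0)`: the right class is
`{v ∣ v ∉ B0}` (representing `(V \ B0)⋆`) and the edges are the identity matching
together with `v u⋆` for every edge `(u, v)` of `D`. -/
def starEdges (D : V → V → Prop) (B0 : Set V) : Set (V × V) :=
  {p | (p.1 = p.2 ∧ p.2 ∉ B0) ∨ (D p.2 p.1 ∧ p.2 ∉ B0)}

/-- The identity matching of the converted bimaze. -/
def starM0 (B0 : Set V) : Set (V × V) := {p | p.1 = p.2 ∧ p.1 ∉ B0}

end Star

/-- The property `(†)` of a dimaze: the maximal linkable sets are exactly the sets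
linkable onto `B0`. -/
def DaggerProp {V : Type*} (D : V → V → Prop) (B0 : Set V) : Prop :=
  ∀ I, (Linkable D B0 I ∧ ∀ I', Linkable D B0 I' → I ⊆ I' → I = I') ↔ LinkableOnto D B0 I

/-- The property `(‡)` of a bimaze: the maximal `m0`-matchable sets are exactly the sets
`m0`-matchable onto the right class `Wcl`. -/
def DDaggerProp {V W : Type*} (E m0 : Set (V × W)) (Wcl : Set W) : Prop :=
  ∀ I, (M0Matchable E m0 I ∧ ∀ I', M0Matchable E m0 I' → I ⊆ I' → I = I') ↔
    M0MatchableOnto E m0 I Wcl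


/-! By `(†)` the bases of `M_L(D, B₀)` are exactly the sets linkable onto `B₀`, so it suffices
to show that `I` is `m₀`-matchable iff it avoids some set linkable onto `B₀`.

Given a linkage `Q` onto `B₀` from `B`, match every non-initial vertex of a path to the star copy
of its predecessor and every vertex off `Q` to its own star copy. This covers exactly `V \ B`,
and since `B₀` consists of sinks it uses only edges of `(D, B₀)⋆`; every component of `m₀ ∪ m`
lies within one (finite) path or is a single `m₀`-edge.

Conversely, given an `m₀`-matching `m` of `I`, walk from each `b ∈ B₀` alternately along `m` and
back along `m₀`. As `m` is a matching whose star side avoids `B₀`, these walks are disjoint and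
never repeat a vertex, so finiteness of the components forces each to stop at a vertex outside
`I`. Reversed, they form a linkage onto `B₀` from a set disjoint from `I`. -/

open Relation Function

theorem Relation.ReflTransGen.mem_of_closed {α : Type*} {r : α → α → Prop} {T : Set α}
    {x y : α} (hxy : ReflTransGen r x y) (hT : ∀ a ∈ T, ∀ b, r a b → b ∈ T) (hx : x ∈ T) :
    y ∈ T := by
  induction hxy with
  | refl => exact hx
  | tail _ hbc ih => exact hT _ ih _ hbc

theorem eq_and_eq_of_iterate_eq {α : Type*} {f : α → α} {A S : Set α} (hf : InjOn f A)
    (hfS : ∀ a ∈ A, f a ∉ S) {b b' : α} (hb : b ∈ S) (hb' : b' ∈ S) {i j : ℕ}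
    (hi : ∀ k < i, f^[k] b ∈ A) (hj : ∀ k < j, f^[k] b' ∈ A) (h : f^[i] b = f^[j] b') :
    b = b' ∧ i = j := by
  induction i generalizing j with
  | zero =>
    cases j with
    | zero => exact ⟨h, rfl⟩
    | succ j =>
      rw [iterate_zero_apply, iterate_succ_apply'] at h
      exact absurd (h ▸ hb) (hfS _ (hj j j.lt_succ_self))
  | succ i ih =>
    cases j with
    | zero =>
      rw [iterate_zero_apply, iterate_succ_apply'] at h
      exact absurd (h ▸ hb') (hfS _ (hi i i.lt_succ_self))
    | succ j =>
      rw [iterate_succ_apply', iterate_succ_apply'] at h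
      obtain ⟨rfl, rfl⟩ := ih (fun k hk => hi k (hk.trans i.lt_succ_self))
        (fun k hk => hj k (hk.trans j.lt_succ_self))
        (hf (hi i i.lt_succ_self) (hj j j.lt_succ_self) h)
      exact ⟨rfl, rfl⟩

section Bipartite

variable {W : Type*}

theorem bipStep_mono {F F' : Set (V × W)} (h : F ⊆ F') : bipStep F ≤ bipStep F' := by
  rintro (v | w) (v' | w') hab
  exacts [hab.elim, h hab, h hab, hab.elim]

theorem FiniteComponents.subset {F F' : Set (V × W)} (hF' : FiniteComponents F') (h : F ⊆ F') :
    FiniteComponents F := fun x =>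
  (hF' x).subset fun _ hy => ReflTransGen.mono (bipStep_mono h) _ _ hy

theorem M0Matchable.subset {E m0 : Set (V × W)} {I J : Set V} (hJ : M0Matchable E m0 J)
    (hIJ : I ⊆ J) : M0Matchable E m0 I := by
  obtain ⟨m, ⟨⟨hmE, hmm⟩, hfin⟩, rfl⟩ := hJ
  refine ⟨{p ∈ m | p.1 ∈ I}, ⟨⟨fun p hp => hmE hp.1, fun p hp q hq => hmm p hp.1 q hq.1⟩,
    hfin.subset (union_subset_union_right m0 (sep_subset _ _))⟩, ?_⟩
  ext x
  constructor
  · rintro ⟨p, hp, rfl⟩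
    exact hp.2
  · intro hx
    obtain ⟨p, hp, rfl⟩ := hIJ hx
    exact ⟨p, ⟨hp, hx⟩, rfl⟩

end Bipartite

/-- A component projects into a reachability set of `r`. -/
theorem finiteComponents_of_finite_reach {F : Set (V × V)} (r : V → V → Prop)
    (hF : ∀ p ∈ F, r p.1 p.2 ∧ r p.2 p.1) (hr : ∀ v, {u | ReflTransGen r v u}.Finite) :
    FiniteComponents F := by
  intro x
  have hstep : bipStep F ≤ (r on Sum.elim id id) := by
    rintro (v | w) (v' | w') hab
    exacts [hab.elim, (hF _ hab).1, (hF _ hab).2, hab.elim]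
  refine ((hr (Sum.elim id id x)).preimage' fun v _ => ?_).subset
    fun y hy => ReflTransGen.lift _ hstep _ _ hy
  exact (toFinite {Sum.inl v, Sum.inr v}).subset (by rintro (u | u) rfl <;> simp)

namespace DiWalk

variable {w : DiWalk V} {D : V → V → Prop}

theorem support_finite (h : ¬ w.IsRay) : w.support.Finite := by
  obtain ⟨n, hn⟩ := ENat.ne_top_iff_exists.mp h
  refine ((finite_Iic n).image w.vtx).subset ?_
  rintro _ ⟨i, hi, rfl⟩
  exact ⟨i, by rw [← hn] at hi; exact_mod_cast hi, rfl⟩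

theorem ini_mem_support (w : DiWalk V) : w.Ini ∈ w.support := ⟨0, zero_le, rfl⟩

theorem ter_mem_support (w : DiWalk V) : w.Ter ∈ w.support :=
  ⟨w.len.toNat, ENat.natCast_toNat_le_self _, rfl⟩

theorem mem_edges_iff {u v : V} :
    (u, v) ∈ w.edges ↔ ∃ i : ℕ, (i : ℕ∞) + 1 ≤ w.len ∧ w.vtx i = u ∧ w.vtx (i + 1) = v := by
  simp only [edges, mem_ofPred_eq, Prod.mk.injEq, eq_comm]

theorem fst_mem_support_of_mem_edges {u v : V} (h : (u, v) ∈ w.edges) : u ∈ w.support := by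
  obtain ⟨i, hi, rfl, -⟩ := mem_edges_iff.mp h
  exact ⟨i, le_self_add.trans hi, rfl⟩

theorem snd_mem_support_of_mem_edges {u v : V} (h : (u, v) ∈ w.edges) : v ∈ w.support := by
  obtain ⟨i, hi, -, rfl⟩ := mem_edges_iff.mp h
  exact ⟨i + 1, by push_cast; exact hi, rfl⟩

theorem exists_mem_edges_of_ne_ini {v : V} (hv : v ∈ w.support) (hne : v ≠ w.Ini) :
    ∃ u, (u, v) ∈ w.edges := by
  obtain ⟨_ | i, hi, rfl⟩ := hv
  · exact absurd rfl hne
  · exact ⟨w.vtx i, mem_edges_iff.mpr ⟨i, by push_cast at hi; exact hi, rfl, rfl⟩⟩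

theorem IsPathIn.adj_of_mem_edges (hw : w.IsPathIn D) {u v : V} (h : (u, v) ∈ w.edges) :
    D u v := by
  obtain ⟨i, hi, rfl, rfl⟩ := mem_edges_iff.mp h
  exact hw.1 i hi

theorem IsPathIn.ne_ini_of_mem_edges (hw : w.IsPathIn D) {u v : V} (h : (u, v) ∈ w.edges) :
    v ≠ w.Ini := by
  obtain ⟨i, hi, -, rfl⟩ := mem_edges_iff.mp h
  exact fun hv => i.succ_ne_zero (hw.2 (i + 1) 0 (by push_cast; exact hi) zero_le hv)

theorem IsPathIn.fst_eq_of_mem_edges (hw : w.IsPathIn D) {u u' v : V} (h : (u, v) ∈ w.edges)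
    (h' : (u', v) ∈ w.edges) : u = u' := by
  obtain ⟨i, hi, rfl, rfl⟩ := mem_edges_iff.mp h
  obtain ⟨j, hj, rfl, hij⟩ := mem_edges_iff.mp h'
  rw [Nat.succ_injective (hw.2 _ _ (by push_cast; exact hj) (by push_cast; exact hi) hij)]

theorem IsPathIn.snd_eq_of_mem_edges (hw : w.IsPathIn D) {u v v' : V} (h : (u, v) ∈ w.edges)
    (h' : (u, v') ∈ w.edges) : v = v' := by
  obtain ⟨i, hi, rfl, rfl⟩ := mem_edges_iff.mp h
  obtain ⟨j, hj, hij, rfl⟩ := mem_edges_iff.mp h'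
  rw [hw.2 _ _ (le_self_add.trans hj) (le_self_add.trans hi) hij]

def reverseOrbit (f : V → V) (b : V) (N : ℕ) : DiWalk V := ⟨fun i => f^[N - i] b, N⟩

variable {f : V → V} {b : V} {N : ℕ}

theorem reverseOrbit_not_isRay : ¬ (reverseOrbit f b N).IsRay := ENat.natCast_ne_top N

theorem reverseOrbit_ini : (reverseOrbit f b N).Ini = f^[N] b := rfl

theorem reverseOrbit_ter : (reverseOrbit f b N).Ter = b := by
  simp [Ter, reverseOrbit]

theorem mem_support_reverseOrbit {x : V} (hx : x ∈ (reverseOrbit f b N).support) :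
    ∃ k ≤ N, f^[k] b = x := by
  obtain ⟨i, -, rfl⟩ := hx
  exact ⟨N - i, N.sub_le i, rfl⟩

theorem reverseOrbit_isPathIn (hinj : ∀ i ≤ N, ∀ j ≤ N, f^[i] b = f^[j] b → i = j)
    (hD : ∀ k < N, D (f^[k + 1] b) (f^[k] b)) : (reverseOrbit f b N).IsPathIn D := by
  constructor
  · intro i hi
    change (i : ℕ∞) + 1 ≤ N at hi
    have hi : i + 1 ≤ N := by exact_mod_cast hi
    have := hD (N - (i + 1)) (by omega)
    rwa [show N - (i + 1) + 1 = N - i by omega] at this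
  · intro i j hi hj h
    change (i : ℕ∞) ≤ N at hi
    change (j : ℕ∞) ≤ N at hj
    have hi : i ≤ N := by exact_mod_cast hi
    have hj : j ≤ N := by exact_mod_cast hj
    have := hinj (N - i) (by omega) (N - j) (by omega) h
    omega

end DiWalk

section PathSystem

variable {Q : Set (DiWalk V)} {D : V → V → Prop}

theorem mem_eSet {e : V × V} : e ∈ ESet Q ↔ ∃ q ∈ Q, e ∈ q.edges := by
  simp only [ESet, mem_iUnion, exists_prop]

theorem mem_vSet {x : V} : x ∈ VSet Q ↔ ∃ q ∈ Q, x ∈ q.support := by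
  simp only [VSet, mem_iUnion, exists_prop]

theorem PairwiseDisjointWalks.eq_of_mem_support (hQ : PairwiseDisjointWalks Q) {q q' : DiWalk V}
    (hq : q ∈ Q) (hq' : q' ∈ Q) {x : V} (hx : x ∈ q.support) (hx' : x ∈ q'.support) : q = q' :=
  by_contra fun hne => disjoint_left.mp (hQ q hq q' hq' hne) hx hx'

theorem fst_mem_vSet_of_mem_eSet {u v : V} (h : (u, v) ∈ ESet Q) : u ∈ VSet Q := by
  obtain ⟨q, hq, he⟩ := mem_eSet.mp h
  exact mem_vSet.mpr ⟨q, hq, DiWalk.fst_mem_support_of_mem_edges he⟩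

theorem snd_mem_vSet_of_mem_eSet {u v : V} (h : (u, v) ∈ ESet Q) : v ∈ VSet Q := by
  obtain ⟨q, hq, he⟩ := mem_eSet.mp h
  exact mem_vSet.mpr ⟨q, hq, DiWalk.snd_mem_support_of_mem_edges he⟩

theorem IsPathSystem.fst_eq_of_mem_eSet (hQ : IsPathSystem D Q) {u u' v : V}
    (h : (u, v) ∈ ESet Q) (h' : (u', v) ∈ ESet Q) : u = u' := by
  obtain ⟨q, hq, he⟩ := mem_eSet.mp h
  obtain ⟨q', hq', he'⟩ := mem_eSet.mp h'
  obtain rfl := hQ.2.eq_of_mem_support hq hq' (DiWalk.snd_mem_support_of_mem_edges he)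
    (DiWalk.snd_mem_support_of_mem_edges he')
  exact (hQ.1 q hq).fst_eq_of_mem_edges he he'

theorem IsPathSystem.snd_eq_of_mem_eSet (hQ : IsPathSystem D Q) {u v v' : V}
    (h : (u, v) ∈ ESet Q) (h' : (u, v') ∈ ESet Q) : v = v' := by
  obtain ⟨q, hq, he⟩ := mem_eSet.mp h
  obtain ⟨q', hq', he'⟩ := mem_eSet.mp h'
  obtain rfl := hQ.2.eq_of_mem_support hq hq' (DiWalk.fst_mem_support_of_mem_edges he)
    (DiWalk.fst_mem_support_of_mem_edges he')
  exact (hQ.1 q hq).snd_eq_of_mem_edges he he'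

theorem PairwiseDisjointWalks.finite_reach (hQ : PairwiseDisjointWalks Q)
    (hfin : ∀ q ∈ Q, ¬ q.IsRay) (v : V) :
    {u | ReflTransGen (fun a b => a = b ∨ ∃ q ∈ Q, a ∈ q.support ∧ b ∈ q.support) v u}.Finite := by
  by_cases hv : ∃ q ∈ Q, v ∈ q.support
  · obtain ⟨q, hq, hvq⟩ := hv
    refine (DiWalk.support_finite (hfin q hq)).subset fun u hu => hu.mem_of_closed ?_ hvq
    rintro a ha b (rfl | ⟨q', hq', haq', hbq'⟩)
    · exact ha
    · rwa [hQ.eq_of_mem_support hq hq' ha haq']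
  · refine (finite_singleton v).subset fun u hu => hu.mem_of_closed ?_ rfl
    rintro a rfl b (rfl | ⟨q', hq', haq', -⟩)
    · rfl
    · exact absurd ⟨q', hq', haq'⟩ hv

end PathSystem

section Forward

variable {D : V → V → Prop} {B0 : Set V} {Q : Set (DiWalk V)}

/-- In the converted bimaze, a linkage `Q` becomes the matching pairing each vertex of a path
with the star copy of its predecessor and each vertex off `Q` with its own star copy. -/
def linkageMatching (Q : Set (DiWalk V)) : Set (V × V) :=
  {p | (p.2, p.1) ∈ ESet Q} ∪ {p | p.1 = p.2 ∧ p.1 ∉ VSet Q}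

theorem mem_linkageMatching {x y : V} :
    (x, y) ∈ linkageMatching Q ↔ (y, x) ∈ ESet Q ∨ x = y ∧ x ∉ VSet Q :=
  Iff.rfl

theorem isBipMatching_linkageMatching (hDim : IsDimaze D B0) (hQ : IsPathSystem D Q)
    (hB0 : B0 ⊆ VSet Q) : IsBipMatching (starEdges D B0) (linkageMatching Q) := by
  refine ⟨?_, ?_⟩
  · rintro ⟨x, y⟩ hxy
    obtain h | ⟨rfl, hx⟩ := mem_linkageMatching.mp hxy
    · obtain ⟨q, hq, he⟩ := mem_eSet.mp h
      have hD := (hQ.1 q hq).adj_of_mem_edges he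
      exact Or.inr ⟨hD, fun hy => hDim y hy x hD⟩
    · exact Or.inl ⟨rfl, fun hx' => hx (hB0 hx')⟩
  · rintro ⟨x, y⟩ hp ⟨x', y'⟩ hp' hshare
    obtain h | ⟨rfl, hx⟩ := mem_linkageMatching.mp hp <;>
      obtain h' | ⟨rfl, hx'⟩ := mem_linkageMatching.mp hp' <;>
      obtain rfl | rfl := hshare
    · rw [hQ.fst_eq_of_mem_eSet h h']
    · rw [hQ.snd_eq_of_mem_eSet h h']
    · exact absurd (snd_mem_vSet_of_mem_eSet h) hx'
    · exact absurd (fst_mem_vSet_of_mem_eSet h) hx'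
    · exact absurd (snd_mem_vSet_of_mem_eSet h') hx
    · exact absurd (fst_mem_vSet_of_mem_eSet h') hx
    · rfl
    · rfl

theorem fst_image_linkageMatching (hQ : IsPathSystem D Q) :
    Prod.fst '' linkageMatching Q = (IniSet Q)ᶜ := by
  ext x
  constructor
  · rintro ⟨⟨x, y⟩, hxy, rfl⟩ ⟨q, hq, hini : q.Ini = x⟩
    obtain h | ⟨-, hx⟩ := mem_linkageMatching.mp hxy
    · obtain ⟨q', hq', he⟩ := mem_eSet.mp h
      obtain rfl := hQ.2.eq_of_mem_support hq hq' (hini ▸ q.ini_mem_support)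
        (DiWalk.snd_mem_support_of_mem_edges he)
      exact (hQ.1 q hq).ne_ini_of_mem_edges he hini.symm
    · exact hx (mem_vSet.mpr ⟨q, hq, hini ▸ q.ini_mem_support⟩)
  · intro hx
    by_cases hxV : x ∈ VSet Q
    · obtain ⟨q, hq, hxq⟩ := mem_vSet.mp hxV
      obtain ⟨u, hu⟩ := DiWalk.exists_mem_edges_of_ne_ini hxq fun h => hx ⟨q, hq, h.symm⟩
      exact ⟨(x, u), Or.inl (mem_eSet.mpr ⟨q, hq, hu⟩), rfl⟩
    · exact ⟨(x, x), Or.inr ⟨rfl, hxV⟩, rfl⟩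

theorem finiteComponents_starM0_union_linkageMatching (hQ : PairwiseDisjointWalks Q)
    (hfin : ∀ q ∈ Q, ¬ q.IsRay) : FiniteComponents (starM0 B0 ∪ linkageMatching Q) := by
  refine finiteComponents_of_finite_reach _ (fun p hp => ?_) (hQ.finite_reach hfin)
  obtain ⟨x, y⟩ := p
  obtain ⟨hxy, -⟩ | hp := hp
  · exact ⟨Or.inl hxy, Or.inl hxy.symm⟩
  obtain h | ⟨rfl, -⟩ := mem_linkageMatching.mp hp
  · obtain ⟨q, hq, he⟩ := mem_eSet.mp h
    have hy := DiWalk.fst_mem_support_of_mem_edges he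
    have hx := DiWalk.snd_mem_support_of_mem_edges he
    exact ⟨Or.inr ⟨q, hq, hx, hy⟩, Or.inr ⟨q, hq, hy, hx⟩⟩
  · exact ⟨Or.inl rfl, Or.inl rfl⟩

theorem LinkableOnto.m0Matchable_compl (hDim : IsDimaze D B0) {B : Set V}
    (hB : LinkableOnto D B0 B) : M0Matchable (starEdges D B0) (starM0 B0) Bᶜ := by
  obtain ⟨Q, ⟨hQ, hfin⟩, rfl, hTer⟩ := hB
  have hB0 : B0 ⊆ VSet Q := by
    rw [← hTer]
    rintro _ ⟨q, hq, -, rfl⟩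
    exact mem_vSet.mpr ⟨q, hq, q.ter_mem_support⟩
  exact ⟨linkageMatching Q, ⟨isBipMatching_linkageMatching hDim hQ hB0,
    finiteComponents_starM0_union_linkageMatching hQ.2 fun q hq => (hfin q hq).1⟩,
    fst_image_linkageMatching hQ⟩

end Forward

section Backward

variable {D : V → V → Prop} {B0 : Set V} {m : Set (V × V)}

open Classical in
/-- The partner of a matched vertex `x`; unmatched vertices get the junk value `x`. -/
noncomputable def matchPartner (m : Set (V × V)) (x : V) : V :=
  if h : ∃ u, (x, u) ∈ m then h.choose else x

theorem matchPartner_mem {x : V} (hx : x ∈ Prod.fst '' m) : (x, matchPartner m x) ∈ m := by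
  have h : ∃ u, (x, u) ∈ m := by
    obtain ⟨⟨x, u⟩, hxu, rfl⟩ := hx
    exact ⟨u, hxu⟩
  rw [matchPartner, dif_pos h]
  exact h.choose_spec

theorem IsBipMatching.injOn_matchPartner {E : Set (V × V)} (hm : IsBipMatching E m) :
    InjOn (matchPartner m) (Prod.fst '' m) := fun _ hx _ hy h =>
  congrArg Prod.fst (hm.2 _ (matchPartner_mem hx) _ (matchPartner_mem hy) (Or.inr h))

theorem matchPartner_not_mem (hm : m ⊆ starEdges D B0) {x : V} (hx : x ∈ Prod.fst '' m) :
    matchPartner m x ∉ B0 := by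
  rcases hm (matchPartner_mem hx) with ⟨-, h⟩ | ⟨-, h⟩ <;> exact h

theorem reflTransGen_iterate_matchPartner (hm : m ⊆ starEdges D B0) {b : V} {n : ℕ}
    (hn : ∀ k < n, (matchPartner m)^[k] b ∈ Prod.fst '' m) :
    ReflTransGen (bipStep (starM0 B0 ∪ m)) (Sum.inl b) (Sum.inl ((matchPartner m)^[n] b)) := by
  induction n with
  | zero => exact ReflTransGen.refl
  | succ n ih =>
    set x := (matchPartner m)^[n] b
    have hx := hn n n.lt_succ_self
    have hforth : bipStep (starM0 B0 ∪ m) (Sum.inl x) (Sum.inr (matchPartner m x)) :=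
      Or.inr (matchPartner_mem hx)
    have hback :
        bipStep (starM0 B0 ∪ m) (Sum.inr (matchPartner m x)) (Sum.inl (matchPartner m x)) :=
      Or.inl ⟨rfl, matchPartner_not_mem hm hx⟩
    rw [iterate_succ_apply']
    exact ((ih fun k hk => hn k (hk.trans n.lt_succ_self)).tail hforth).tail hback

theorem IsM0Matching.exists_iterate_matchPartner_not_mem
    (hm : IsM0Matching (starEdges D B0) (starM0 B0) m) {b : V} (hb : b ∈ B0) :
    ∃ N, (matchPartner m)^[N] b ∉ Prod.fst '' m ∧
      ∀ k < N, (matchPartner m)^[k] b ∈ Prod.fst '' m := by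
  classical
  have h : ∃ n, (matchPartner m)^[n] b ∉ Prod.fst '' m := by
    by_contra! h
    have hinj : Injective fun n => (Sum.inl ((matchPartner m)^[n] b) : V ⊕ V) := fun i j hij =>
      (eq_and_eq_of_iterate_eq hm.1.injOn_matchPartner (fun _ => matchPartner_not_mem hm.1.1)
        hb hb (fun k _ => h k) (fun k _ => h k) (Sum.inl_injective hij)).2
    exact infinite_range_of_injective hinj <| (hm.2 (Sum.inl b)).subset <|
      range_subset_iff.mpr fun n => reflTransGen_iterate_matchPartner hm.1.1 fun k _ => h k
  exact ⟨Nat.find h, Nat.find_spec h, fun k hk => not_not.mp (Nat.find_min h hk)⟩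

theorem IsBipMatching.reverseOrbit_matchPartner_isPathIn
    (hm : IsBipMatching (starEdges D B0) m) {b : V} (hb : b ∈ B0) {N : ℕ}
    (hN : ∀ k < N, (matchPartner m)^[k] b ∈ Prod.fst '' m) :
    (DiWalk.reverseOrbit (matchPartner m) b N).IsPathIn D := by
  have horbit : ∀ {i j}, i ≤ N → j ≤ N → (matchPartner m)^[i] b = (matchPartner m)^[j] b →
      i = j := fun hi hj h =>
    (eq_and_eq_of_iterate_eq hm.injOn_matchPartner (fun _ => matchPartner_not_mem hm.1) hb hb
      (fun k hk => hN k (hk.trans_le hi)) (fun k hk => hN k (hk.trans_le hj)) h).2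
  refine DiWalk.reverseOrbit_isPathIn (fun i hi j hj => horbit hi hj) fun k hk => ?_
  rw [iterate_succ_apply']
  rcases hm.1 (matchPartner_mem (hN k hk)) with ⟨hloop, -⟩ | ⟨hD, -⟩
  · have hloop : (matchPartner m)^[k] b = (matchPartner m)^[k + 1] b := by
      rw [iterate_succ_apply']
      exact hloop
    exact absurd (horbit hk.le hk hloop) k.succ_ne_self.symm
  · exact hD

/-- Reversing the alternating walks that start at `B0` yields a linkage onto `B0` whose initial
vertices are the unmatched ends of these walks. -/
theorem M0Matchable.exists_linkableOnto_disjoint {I : Set V}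
    (hI : M0Matchable (starEdges D B0) (starM0 B0) I) :
    ∃ B, LinkableOnto D B0 B ∧ Disjoint I B := by
  obtain ⟨m, hm, rfl⟩ := hI
  set f := matchPartner m
  choose! N hNout hNin using fun b (hb : b ∈ B0) => hm.exists_iterate_matchPartner_not_mem hb
  have hdisj : ∀ {b b' i j}, b ∈ B0 → b' ∈ B0 → i ≤ N b → j ≤ N b' → f^[i] b = f^[j] b' →
      b = b' := fun hb hb' hi hj h =>
    (eq_and_eq_of_iterate_eq hm.1.injOn_matchPartner (fun _ => matchPartner_not_mem hm.1.1)
      hb hb' (fun k hk => hNin _ hb k (hk.trans_le hi))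
      (fun k hk => hNin _ hb' k (hk.trans_le hj)) h).1
  set Q := (fun b => DiWalk.reverseOrbit f b (N b)) '' B0
  refine ⟨IniSet Q, ⟨Q, ⟨⟨?_, ?_⟩, ?_⟩, rfl, ?_⟩, ?_⟩
  · rintro _ ⟨b, hb, rfl⟩
    exact hm.1.reverseOrbit_matchPartner_isPathIn hb (hNin b hb)
  · rintro _ ⟨b, hb, rfl⟩ _ ⟨b', hb', rfl⟩ hne
    refine disjoint_left.mpr fun x hx hx' => hne ?_
    obtain ⟨i, hi, rfl⟩ := DiWalk.mem_support_reverseOrbit hx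
    obtain ⟨j, hj, h⟩ := DiWalk.mem_support_reverseOrbit hx'
    rw [hdisj hb hb' hi hj h.symm]
  · rintro _ ⟨b, hb, rfl⟩
    exact ⟨DiWalk.reverseOrbit_not_isRay, DiWalk.reverseOrbit_ter ▸ hb⟩
  · ext x
    constructor
    · rintro ⟨_, ⟨b, hb, rfl⟩, -, rfl⟩
      rwa [DiWalk.reverseOrbit_ter]
    · exact fun hx => ⟨_, ⟨x, hx, rfl⟩, DiWalk.reverseOrbit_not_isRay, DiWalk.reverseOrbit_ter⟩
  · refine disjoint_left.mpr ?_
    rintro x hx ⟨_, ⟨b, hb, rfl⟩, rfl⟩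
    rw [DiWalk.reverseOrbit_ini] at hx
    exact hNout b hb hx

end Backward

theorem isBase_iff_linkableOnto {D : V → V → Prop} {B0 : Set V} {M : Matroid V}
    (hInd : ∀ I, M.Indep I ↔ Linkable D B0 I) (hDag : DaggerProp D B0) {B : Set V} :
    M.IsBase B ↔ LinkableOnto D B0 B := by
  rw [Matroid.isBase_iff_maximal_indep, ← hDag B, maximal_subset_iff]
  simp only [hInd]

theorem dual_of_strict_gammoid_is_pathTransversal {V : Type*} (D : V → V → Prop)
    (B0 : Set V) (hDim : IsDimaze D B0) (M : Matroid V) (hE : M.E = Set.univ)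
    (hInd : ∀ I, M.Indep I ↔ Linkable D B0 I) (hDag : DaggerProp D B0) :
    ∀ I, M.dual.Indep I ↔ M0Matchable (starEdges D B0) (starM0 B0) I := by
  intro I
  simp only [Matroid.dual_indep_iff_exists', isBase_iff_linkableOnto hInd hDag]
  constructor
  · rintro ⟨-, B, hB, hIB⟩
    exact (hB.m0Matchable_compl hDim).subset (subset_compl_iff_disjoint_right.mpr hIB)
  · exact fun hI => ⟨hE ▸ subset_univ I, hI.exists_linkableOnto_disjoint⟩
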